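/- Let (a,a*) ∈ (ℤ/3ℤ)² × (ℤ/3ℤ)² be nonzero, and consider the ℂ-algebra endomorphism of ℂ[X_b : b ∈ (ℤ/3ℤ)²] determined by the substitution X_b ↦ ω^{a*·(b−a)}·X_{b−a}. This endomorphism maps the space of homogeneous degree-6 polynomials in the nine variables X_b to itself, and its trace on that space equals 6. -/

import Mathlib

open MvPolynomial

/-- `ω = exp(2πi/3)`, a primitive cube root of unity. -/
noncomputable def omega : ℂ := Complex.exp (2 * Real.pi * Complex.I / 3)

/-- The index set `(ℤ/3)²` of the nine variables. -/
abbrev Idx : Type := ZMod 3 × ZMod 3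

/-- Standard dot product on `(ℤ/3)²` with values in `ℤ/3`. -/
def pdot (a b : Idx) : ZMod 3 := a.1 * b.1 + a.2 * b.2

/-- The `ℂ`-algebra endomorphism of `ℂ[X_b : b ∈ (ℤ/3)²]` determined by the
substitution `X_b ↦ ω^{a*·(b−a)}·X_{b−a}`, as a linear map. -/
noncomputable def Lop (a as : Idx) : MvPolynomial Idx ℂ →ₗ[ℂ] MvPolynomial Idx ℂ :=
  (aeval fun b : Idx => C (omega ^ (pdot as (b - a)).val) * X (b - a) :
    MvPolynomial Idx ℂ →ₐ[ℂ] MvPolynomial Idx ℂ).toLinearMap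

-- omega basics
lemma omega_pow_three : omega ^ 3 = 1 := by
  rw [omega, ← Complex.exp_nat_mul]
  rw [show ((3:ℕ):ℂ) * (2 * Real.pi * Complex.I / 3) = 2 * Real.pi * Complex.I by push_cast; ring]
  simpa using Complex.exp_int_mul_two_pi_mul_I 1

lemma omega_pow_mod (n : ℕ) : omega ^ n = omega ^ (n % 3) := by
  conv_lhs => rw [← Nat.div_add_mod n 3, pow_add, pow_mul, omega_pow_three, one_pow, one_mul]

lemma omega_pow_zmod_eq_one {n : ℕ} (h : (n : ZMod 3) = 0) : omega ^ n = 1 := by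
  rw [omega_pow_mod]
  have : n % 3 = 0 := by
    have := (ZMod.natCast_eq_zero_iff n 3).mp h
    omega
  simp [this]

lemma omega_ne_one : omega ≠ 1 := by
  rw [omega]
  intro hc
  obtain ⟨n, hn⟩ := Complex.exp_eq_one_iff.mp hc
  have h2 : (2 * Real.pi * Complex.I) ≠ 0 := by
    simp [Real.pi_ne_zero, Complex.I_ne_zero, Complex.ofReal_ne_zero]
  have h3 : (1 : ℂ) = 3 * n := by
    have := hn
    rw [div_eq_iff (by norm_num : (3:ℂ) ≠ 0)] at this
    have h5 : (2 * Real.pi * Complex.I) * 1 = (2 * Real.pi * Complex.I) * (3*n) := by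
      linear_combination this
    exact mul_left_cancel₀ h2 h5
  have h4 : (1 : ℤ) = 3 * n := by exact_mod_cast h3
  omega

lemma omega_sum : 1 + omega + omega ^ 2 = 0 := by
  have h : (omega - 1) * (1 + omega + omega ^ 2) = 0 := by
    have : omega ^ 3 - 1 = 0 := by rw [omega_pow_three]; ring
    linear_combination this
  rcases mul_eq_zero.mp h with h1 | h2
  · exact absurd (sub_eq_zero.mp h1) omega_ne_one
  · exact h2

-- generic substitution form: X_b ↦ C (φ b) * X (f b)
lemma aeval_sub_monomial (φ : Idx → ℂ) (f : Idx → Idx) (hf : Function.Injective f)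
    (d : Idx →₀ ℕ) :
    aeval (fun b : Idx => C (φ b) * X (f b)) (monomial d (1:ℂ)) =
      (∏ b ∈ d.support, φ b ^ d b) • monomial (d.mapDomain f) 1 := by
  rw [aeval_monomial, map_one, one_mul]
  have h1 : (d.prod fun b k => (C (φ b) * X (f b) : MvPolynomial Idx ℂ) ^ k) =
      (∏ b ∈ d.support, (C (φ b ^ d b) : MvPolynomial Idx ℂ)) *
        ∏ b ∈ d.support, (X (f b) : MvPolynomial Idx ℂ) ^ d b := by
    rw [Finsupp.prod, ← Finset.prod_mul_distrib]
    refine Finset.prod_congr rfl fun b _ => by rw [mul_pow, C_pow]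
  rw [h1]
  have h2 : (∏ b ∈ d.support, (C (φ b ^ d b) : MvPolynomial Idx ℂ)) =
      C (∏ b ∈ d.support, φ b ^ d b) := by rw [map_prod]
  have h3 : (∏ b ∈ d.support, (X (f b) : MvPolynomial Idx ℂ) ^ d b) =
      monomial (d.mapDomain f) 1 := by
    rw [monomial_eq, map_one, one_mul, Finsupp.prod_mapDomain_index_inj hf, Finsupp.prod]
  rw [h2, h3, smul_eq_C_mul]

lemma Lop_monomial (a as : Idx) (d : Idx →₀ ℕ) :
    Lop a as (monomial d (1:ℂ)) =
      (∏ b ∈ d.support, (omega ^ (pdot as (b - a)).val) ^ d b) •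
        monomial (d.mapDomain (· - a)) 1 := by
  exact aeval_sub_monomial _ _ (sub_left_injective) d

lemma Lop_mem (a as : Idx) (P : MvPolynomial Idx ℂ) (hP : P ∈ homogeneousSubmodule Idx ℂ 6) :
    Lop a as P ∈ homogeneousSubmodule Idx ℂ 6 := by
  rw [mem_homogeneousSubmodule] at hP ⊢
  have := hP.aeval (fun b : Idx => C (omega ^ (pdot as (b - a)).val) * X (b - a))
    (fun b => by
      simpa using (isHomogeneous_C Idx (omega ^ (pdot as (b - a)).val)).mul
        (isHomogeneous_X ℂ (b - a)))
  exact (one_mul 6 : (1:ℕ)*6 = 6) ▸ this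

def Sdeg : Set (Idx →₀ ℕ) := {d | d.degree = 6}

lemma degree_eq_sum_univ (d : Idx →₀ ℕ) : d.degree = Finset.univ.sum ⇑d :=
  Finset.sum_subset (Finset.subset_univ _) (fun x _ hx => Finsupp.notMem_support_iff.mp hx)

instance : Fintype ↥Sdeg := Fintype.ofFinset (Finset.finsuppAntidiag (Finset.univ) 6) (by
  intro d
  rw [Finset.mem_finsuppAntidiag]
  show _ ↔ d.degree = 6
  rw [degree_eq_sum_univ]
  exact ⟨fun h => h.1, fun h => ⟨h, Finset.subset_univ _⟩⟩)

lemma homog_eq_restrict : homogeneousSubmodule Idx ℂ 6 = restrictSupport ℂ Sdeg :=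
  homogeneousSubmodule_eq_finsupp_supported Idx ℂ 6

noncomputable def homogBasis : Module.Basis ↥Sdeg ℂ ↥(homogeneousSubmodule Idx ℂ 6) :=
  (basisRestrictSupport ℂ Sdeg).map (LinearEquiv.ofEq _ _ homog_eq_restrict.symm)

lemma mem_homog_of_Sdeg {d : Idx →₀ ℕ} (hd : d ∈ Sdeg) :
    monomial d (1:ℂ) ∈ homogeneousSubmodule Idx ℂ 6 := by
  rw [homog_eq_restrict]
  simp [hd]

lemma homogBasis_apply (d : ↥Sdeg) :
    (homogBasis d : MvPolynomial Idx ℂ) = monomial d.val 1 := by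
  have : homogBasis d = ⟨monomial d.val 1, mem_homog_of_Sdeg d.property⟩ := by
    apply homogBasis.repr.injective
    rw [Module.Basis.repr_self]
    symm
    show (basisRestrictSupport ℂ Sdeg).repr
      ((LinearEquiv.ofEq _ _ homog_eq_restrict.symm).symm
        ⟨monomial d.val 1, mem_homog_of_Sdeg d.property⟩) = Finsupp.single d 1
    ext x
    show coeff x.val (monomial d.val (1:ℂ)) = _
    rw [coeff_monomial, Finsupp.single_apply]
    simp [Subtype.ext_iff]
  rw [this]

lemma homogBasis_repr (x : ↥(homogeneousSubmodule Idx ℂ 6)) (d : ↥Sdeg) :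
    homogBasis.repr x d = coeff d.val x.val := by
  show (basisRestrictSupport ℂ Sdeg).repr
    ((LinearEquiv.ofEq _ _ homog_eq_restrict.symm).symm x) d = _
  rfl

lemma trace_restrict_eq (L : MvPolynomial Idx ℂ →ₗ[ℂ] MvPolynomial Idx ℂ)
    (hmap : ∀ P ∈ homogeneousSubmodule Idx ℂ 6, L P ∈ homogeneousSubmodule Idx ℂ 6) :
    LinearMap.trace ℂ ↥(homogeneousSubmodule Idx ℂ 6) (L.restrict hmap) =
      ∑ d : ↥Sdeg, coeff d.val (L (monomial d.val 1)) := by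
  classical
  rw [LinearMap.trace_eq_matrix_trace ℂ homogBasis, Matrix.trace]
  refine Finset.sum_congr rfl fun d _ => ?_
  rw [Matrix.diag_apply, LinearMap.toMatrix_apply, homogBasis_repr]
  congr 1
  show (L (homogBasis d : MvPolynomial Idx ℂ)) = _
  rw [homogBasis_apply]

-- ### case a ≠ 0 infrastructure

/-- complement vector -/
def Tv (a : Idx) : Idx := if a.1 = 0 then (1,0) else (0,1)

def smap (a : Idx) (p : ZMod 3 × ZMod 3) : Idx :=
  (p.1 * a.1 + p.2 * (Tv a).1, p.1 * a.2 + p.2 * (Tv a).2)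

lemma smap_bij {a : Idx} (ha : a ≠ 0) : Function.Bijective (smap a) := by
  revert a; decide

lemma pdot_add (u x y : Idx) : pdot u (x + y) = pdot u x + pdot u y := by
  simp [pdot]; ring

lemma zmod3_cases (k : ZMod 3) : k = 0 ∨ k = 1 ∨ k = 2 := by revert k; decide

lemma smap_add_a (a : Idx) (k j : ZMod 3) :
    smap a (k, j) + a = smap a (k + 1, j) := by
  simp [smap, Prod.ext_iff]; constructor <;> ring

section ANonzero
variable {a as : Idx} (ha : a ≠ 0) {d : Idx →₀ ℕ}
  (hfix : Finsupp.mapDomain (· - a) d = d)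

include hfix in
lemma per_add (b : Idx) : d (b + a) = d b := by
  have h1 : (Finsupp.mapDomain (· - a) d) (b + a - a) = d (b + a - a) := by rw [hfix]
  rw [Finsupp.mapDomain_apply sub_left_injective] at h1
  simpa using h1

include hfix in
lemma per_smap (p : ZMod 3 × ZMod 3) : d (smap a p) = d (smap a (0, p.2)) := by
  have key : ∀ k j, d (smap a (k, j)) = d (smap a (0, j)) := by
    intro k j
    rcases zmod3_cases k with rfl | rfl | rfl
    · rfl
    · rw [show (1 : ZMod 3) = 0 + 1 by norm_num, ← smap_add_a, per_add hfix]
    · rw [show (2 : ZMod 3) = (0 + 1) + 1 by norm_num, ← smap_add_a, per_add hfix,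
        ← smap_add_a, per_add hfix]
  exact key p.1 p.2

lemma sum_pdot_smap (j : ZMod 3) :
    ∑ k : ZMod 3, pdot as (smap a (k, j) - a) = 0 := by
  revert as a j; decide

include ha hfix in
lemma phase_zero :
    ((∑ b : Idx, d b * (pdot as (b - a)).val : ℕ) : ZMod 3) = 0 := by
  push_cast
  have hc : ∀ b : Idx, (((pdot as (b - a)).val : ℕ) : ZMod 3) = pdot as (b - a) := by
    intro b; rw [ZMod.natCast_val, ZMod.cast_id]
  simp_rw [hc]
  rw [← Function.Bijective.sum_comp (smap_bij ha)
    (fun b => ((d b : ZMod 3) * pdot as (b - a)))]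
  rw [Fintype.sum_prod_type_right]
  have hz : ∀ j : ZMod 3, ∑ k : ZMod 3, (d (smap a (k, j)) : ZMod 3) * pdot as (smap a (k,j) - a)
      = 0 := by
    intro j
    have : ∀ k : ZMod 3, (d (smap a (k, j)) : ZMod 3) * pdot as (smap a (k,j) - a)
        = (d (smap a (0, j)) : ZMod 3) * pdot as (smap a (k,j) - a) := by
      intro k; rw [per_smap hfix (k, j)]
    rw [Finset.sum_congr rfl (fun k _ => this k), ← Finset.mul_sum, sum_pdot_smap, mul_zero]
  rw [Finset.sum_congr rfl (fun j _ => hz j), Finset.sum_const, smul_zero]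
end ANonzero

lemma zmod3_univ : (Finset.univ : Finset (ZMod 3)) = {0, 1, 2} := by decide

lemma zmod3_sum {M : Type*} [AddCommMonoid M] (f : ZMod 3 → M) :
    ∑ j : ZMod 3, f j = f 0 + f 1 + f 2 := by
  rw [zmod3_univ]
  rw [Finset.sum_insert (by decide), Finset.sum_insert (by decide), Finset.sum_singleton,
    add_assoc]

section Count
variable {a : Idx}

lemma sum3 (ha : a ≠ 0) {d : Idx →₀ ℕ} (hfix : Finsupp.mapDomain (· - a) d = d) :
    ∑ j : ZMod 3, 3 * d (smap a (0, j)) = d.degree := by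
  rw [degree_eq_sum_univ, ← Function.Bijective.sum_comp (smap_bij ha) ⇑d,
    Fintype.sum_prod_type_right]
  refine Finset.sum_congr rfl fun j _ => ?_
  have h1 : ∑ k : ZMod 3, d (smap a (k, j)) = ∑ _k : ZMod 3, d (smap a (0, j)) :=
    Finset.sum_congr rfl (fun k _ => per_smap hfix (k, j))
  rw [h1, Finset.sum_const, Finset.card_univ]
  have hcard3 : Fintype.card (ZMod 3) = 3 := rfl
  rw [hcard3, smul_eq_mul]

lemma count_fixed (ha : a ≠ 0) :
    ((Finset.univ.filter
      (fun d : ↥Sdeg => Finsupp.mapDomain (· - a) d.val = d.val)).card : ℕ) = 6 := by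
  classical
  let e := Equiv.ofBijective (smap a) (smap_bij ha)
  have hvb : ∀ (d : ↥Sdeg), Finsupp.mapDomain (· - a) d.val = d.val →
      ∀ j : ZMod 3, d.val (smap a (0, j)) < 3 := by
    intro d hfix j
    have h6 := sum3 ha hfix
    have hp : (d.val).degree = 6 := d.property
    rw [hp] at h6
    rw [zmod3_sum (fun j => 3 * d.val (smap a (0, j)))] at h6
    rcases zmod3_cases j with rfl | rfl | rfl <;> omega
  have hcard : (Finset.univ.filter
      (fun h : ZMod 3 → Fin 3 => (h 0).val + (h 1).val + (h 2).val = 2)).card = 6 := by decide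
  rw [← hcard]
  apply Finset.card_bij
    (i := fun d hd => fun j : ZMod 3 =>
      (⟨d.val (smap a (0, j)), hvb d (by simpa using hd) j⟩ : Fin 3))
  · -- maps into target
    intro d hd
    simp only [Finset.mem_filter, Finset.mem_univ, true_and] at hd ⊢
    have h6 := sum3 ha hd
    have hp : (d.val).degree = 6 := d.property
    rw [hp] at h6
    rw [zmod3_sum (fun j => 3 * d.val (smap a (0, j)))] at h6
    clear_value e
    clear hvb hcard hd hp e
    omega
  · -- injective
    intro d1 hd1 d2 hd2 hij
    simp only [Finset.mem_filter, Finset.mem_univ, true_and] at hd1 hd2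
    ext b
    obtain ⟨p, rfl⟩ := (smap_bij ha).surjective b
    have h1 := per_smap hd1 p
    have h2 := per_smap hd2 p
    have h3 := congrFun hij p.2
    rw [Fin.ext_iff] at h3
    simpa [h1, h2] using h3
  · -- surjective
    intro h hh
    simp only [Finset.mem_filter, Finset.mem_univ, true_and] at hh
    set g : Idx →₀ ℕ := Finsupp.equivFunOnFinite.symm (fun b => (h (e.symm b).2 : ℕ)) with hg
    have hgapp : ∀ b, g b = (h (e.symm b).2 : ℕ) := fun b => rfl
    have hesymm : ∀ p : ZMod 3 × ZMod 3, e.symm (smap a p) = p := by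
      intro p
      rw [Equiv.symm_apply_eq]
      rfl
    have hper : ∀ x : Idx, g (x + a) = g x := by
      intro x
      obtain ⟨p, rfl⟩ := (smap_bij ha).surjective x
      rw [hgapp, hgapp, hesymm]
      have : smap a p + a = smap a (p.1 + 1, p.2) := smap_add_a a p.1 p.2
      rw [this, hesymm]
    have hgfix : Finsupp.mapDomain (· - a) g = g := by
      ext x
      have hx : x = (x + a) - a := by ring
      calc (Finsupp.mapDomain (· - a) g) x
          = (Finsupp.mapDomain (· - a) g) ((x + a) - a) := by rw [← hx]
        _ = g (x + a) := Finsupp.mapDomain_apply sub_left_injective g (x + a)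
        _ = g x := hper x
    have hgdeg : g ∈ Sdeg := by
      show g.degree = 6
      rw [degree_eq_sum_univ, ← Function.Bijective.sum_comp (smap_bij ha) ⇑g,
        Fintype.sum_prod_type_right]
      have : ∀ p : ZMod 3 × ZMod 3, g (smap a p) = (h p.2 : ℕ) := by
        intro p; rw [hgapp, hesymm]
      simp_rw [this]
      rw [Finset.sum_congr rfl (fun j _ => Finset.sum_const (h j : ℕ)),
        zmod3_sum (fun j => (Finset.univ : Finset (ZMod 3)).card • (h j : ℕ))]
      simp only [Finset.card_univ]
      have hcard3 : Fintype.card (ZMod 3) = 3 := rfl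
      rw [hcard3]
      clear_value g e
      simp only [smul_eq_mul]
      clear hvb hcard hgapp hesymm hper hgfix this hg g e
      omega
    refine ⟨⟨g, hgdeg⟩, ?_, ?_⟩
    · simp only [Finset.mem_filter, Finset.mem_univ, true_and]
      exact hgfix
    · funext j
      apply Fin.ext
      show g (smap a (0, j)) = (h j).val
      rw [hgapp, hesymm]

end Count

lemma coeff_Lop (a as : Idx) (d : Idx →₀ ℕ) :
    coeff d (Lop a as (monomial d 1)) =
      if Finsupp.mapDomain (· - a) d = d
        then omega ^ (∑ b : Idx, d b * (pdot as (b - a)).val) else 0 := by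
  rw [Lop_monomial, coeff_smul, coeff_monomial]
  split_ifs with hfix
  · rw [smul_eq_mul, mul_one]
    have h1 : ∀ b ∈ d.support,
        (omega ^ (pdot as (b - a)).val) ^ d b = omega ^ (d b * (pdot as (b - a)).val) := by
      intro b _; rw [← pow_mul, Nat.mul_comm]
    rw [Finset.prod_congr rfl h1, Finset.prod_pow_eq_pow_sum]
    congr 1
    exact Finset.sum_subset (Finset.subset_univ _)
      (fun b _ hb => by rw [Finsupp.notMem_support_iff.mp hb, zero_mul])
  · simp

lemma trace_sum_ne (a as : Idx) (ha : a ≠ 0) :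
    ∑ d : ↥Sdeg, coeff d.val (Lop a as (monomial d.val 1)) = 6 := by
  classical
  have h1 : ∀ d : ↥Sdeg, coeff d.val (Lop a as (monomial d.val 1)) =
      if Finsupp.mapDomain (· - a) d.val = d.val then 1 else 0 := by
    intro d
    rw [coeff_Lop]
    split_ifs with hfix
    · exact omega_pow_zmod_eq_one (phase_zero ha hfix)
    · rfl
  rw [Finset.sum_congr rfl (fun d _ => h1 d), Finset.sum_boole]
  rw [count_fixed ha]
  norm_num

-- ### Fourier infrastructure

lemma omega_zpow_add (x y : ZMod 3) :
    omega ^ x.val * omega ^ y.val = omega ^ (x + y).val := by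
  rw [← pow_add, omega_pow_mod, omega_pow_mod ((x+y).val)]
  congr 1
  have : ((x.val + y.val : ℕ) : ZMod 3) = x + y := by push_cast; simp [ZMod.natCast_val, ZMod.cast_id]
  have h2 : (x + y).val = (x.val + y.val) % 3 := by
    rw [← this]; rw [ZMod.val_natCast]
  omega

lemma pdot_comm (x y : Idx) : pdot x y = pdot y x := by simp [pdot]; ring

lemma pdot_add_left (u v c : Idx) : pdot (u + v) c = pdot u c + pdot v c := by
  simp [pdot]; ring

lemma card_pdot_fiber (v : Idx) (hv : v ≠ 0) (j : ZMod 3) :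
    (Finset.univ.filter (fun c : Idx => pdot v c = j)).card = 3 := by
  revert v j; decide

lemma char_sum (v : Idx) :
    ∑ c : Idx, omega ^ (pdot v c).val = if v = 0 then 9 else 0 := by
  split_ifs with hv
  · subst hv
    have : ∀ c : Idx, pdot 0 c = 0 := by decide
    simp [this]
  · classical
    rw [← Finset.sum_fiberwise Finset.univ (fun c : Idx => pdot v c)
      (fun c => omega ^ (pdot v c).val)]
    have h1 : ∀ j : ZMod 3,
        ∑ c ∈ Finset.univ.filter (fun c : Idx => pdot v c = j), omega ^ (pdot v c).val
          = 3 * omega ^ j.val := by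
      intro j
      rw [Finset.sum_congr rfl (fun c hc => by
        rw [(Finset.mem_filter.mp hc).2]), Finset.sum_const, card_pdot_fiber v hv j,
        nsmul_eq_mul]
      norm_num
    rw [Finset.sum_congr rfl (fun j _ => h1 j), ← Finset.mul_sum,
      zmod3_sum (fun j : ZMod 3 => omega ^ (j : ZMod 3).val)]
    have : (0 : ZMod 3).val = 0 ∧ (1 : ZMod 3).val = 1 ∧ (2 : ZMod 3).val = 2 := by decide
    rw [this.1, this.2.1, this.2.2, pow_zero, pow_one]
    rw [omega_sum, mul_zero]

noncomputable def Four : MvPolynomial Idx ℂ →ₐ[ℂ] MvPolynomial Idx ℂ :=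
  aeval (fun b : Idx => ∑ c : Idx, C (omega ^ (pdot b c).val) * X c)

noncomputable def FourInv : MvPolynomial Idx ℂ →ₐ[ℂ] MvPolynomial Idx ℂ :=
  aeval (fun b : Idx => C ((9:ℂ)⁻¹) * ∑ c : Idx, C (omega ^ (pdot (-b) c).val) * X c)

lemma Four_comp_FourInv : Four.comp FourInv = AlgHom.id ℂ (MvPolynomial Idx ℂ) := by
  apply MvPolynomial.algHom_ext
  intro b
  rw [AlgHom.comp_apply, AlgHom.id_apply]
  rw [FourInv, aeval_X]
  rw [map_mul, map_sum]
  have h1 : ∀ c : Idx, Four (C (omega ^ (pdot (-b) c).val) * X c)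
      = C (omega ^ (pdot (-b) c).val) * ∑ e : Idx, C (omega ^ (pdot c e).val) * X e := by
    intro c
    rw [map_mul]
    congr 1
    · exact Four.commutes _
    · rw [Four, aeval_X]
  rw [Finset.sum_congr rfl (fun c _ => h1 c)]
  have hC9 : Four (C ((9:ℂ)⁻¹)) = C ((9:ℂ)⁻¹) := Four.commutes _
  rw [hC9]
  have h2 : ∀ c : Idx, C (omega ^ (pdot (-b) c).val) * ∑ e : Idx, C (omega ^ (pdot c e).val) * X e
      = ∑ e : Idx, C (omega ^ (pdot (-b + e) c).val) * X e := by
    intro c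
    rw [Finset.mul_sum]
    refine Finset.sum_congr rfl fun e _ => ?_
    rw [← mul_assoc, ← map_mul, omega_zpow_add]
    have hex : pdot (-b) c + pdot c e = pdot (-b + e) c := by
      rw [pdot_add_left, pdot_comm c e]
    rw [hex]
  rw [Finset.sum_congr rfl (fun c _ => h2 c), Finset.sum_comm]
  have h3 : ∀ e : Idx, ∑ c : Idx, C (omega ^ (pdot (-b + e) c).val) * X e
      = (if -b + e = 0 then (9:ℂ) else 0) • X e := by
    intro e
    rw [← Finset.sum_mul, ← map_sum, ← char_sum (-b + e), smul_eq_C_mul]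
  rw [Finset.sum_congr rfl (fun e _ => h3 e)]
  have h4 : ∀ e : Idx, (if -b + e = 0 then (9:ℂ) else 0) • X e
      = if e = b then ((9:ℂ) • X e : MvPolynomial Idx ℂ) else 0 := by
    intro e
    by_cases hb : e = b
    · subst hb
      rw [if_pos (neg_add_cancel e), if_pos rfl]
    · rw [if_neg (fun hh => hb (by linear_combination hh)), if_neg hb, zero_smul]
  rw [Finset.sum_congr rfl (fun e _ => h4 e), Finset.sum_ite_eq' Finset.univ b
    (fun e => ((9:ℂ) • X e : MvPolynomial Idx ℂ))]
  simp only [Finset.mem_univ, if_true]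
  rw [smul_eq_C_mul, ← mul_assoc, ← map_mul]
  norm_num

lemma FourInv_comp_Four : FourInv.comp Four = AlgHom.id ℂ (MvPolynomial Idx ℂ) := by
  apply MvPolynomial.algHom_ext
  intro b
  rw [AlgHom.comp_apply, AlgHom.id_apply]
  rw [Four, aeval_X, map_sum]
  have h1 : ∀ c : Idx, FourInv (C (omega ^ (pdot b c).val) * X c)
      = C (omega ^ (pdot b c).val) *
          (C ((9:ℂ)⁻¹) * ∑ e : Idx, C (omega ^ (pdot (-c) e).val) * X e) := by
    intro c
    rw [map_mul]
    congr 1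
    · exact FourInv.commutes _
    · rw [FourInv, aeval_X]
  rw [Finset.sum_congr rfl (fun c _ => h1 c)]
  have h2 : ∀ c : Idx, C (omega ^ (pdot b c).val) *
        (C ((9:ℂ)⁻¹) * ∑ e : Idx, C (omega ^ (pdot (-c) e).val) * X e)
      = C ((9:ℂ)⁻¹) * ∑ e : Idx, C (omega ^ (pdot (b - e) c).val) * X e := by
    intro c
    rw [mul_left_comm]
    congr 1
    rw [Finset.mul_sum]
    refine Finset.sum_congr rfl fun e _ => ?_
    rw [← mul_assoc, ← map_mul, omega_zpow_add]
    have hex : pdot b c + pdot (-c) e = pdot (b - e) c := by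
      have : pdot (-c) e = pdot (-e) c := by simp [pdot]; ring
      rw [this, ← pdot_add_left]
      congr 1
      abel
    rw [hex]
  rw [Finset.sum_congr rfl (fun c _ => h2 c), ← Finset.mul_sum, Finset.sum_comm]
  have h3 : ∀ e : Idx, ∑ c : Idx, C (omega ^ (pdot (b - e) c).val) * X e
      = (if b - e = 0 then (9:ℂ) else 0) • X e := by
    intro e
    rw [← Finset.sum_mul, ← map_sum, ← char_sum (b - e), smul_eq_C_mul]
  rw [Finset.sum_congr rfl (fun e _ => h3 e)]
  have h4 : ∀ e : Idx, (if b - e = 0 then (9:ℂ) else 0) • X e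
      = if e = b then ((9:ℂ) • X e : MvPolynomial Idx ℂ) else 0 := by
    intro e
    by_cases hb : e = b
    · subst hb
      rw [if_pos (sub_self e), if_pos rfl]
    · rw [if_neg (fun hh => hb (by linear_combination -hh)), if_neg hb, zero_smul]
  rw [Finset.sum_congr rfl (fun e _ => h4 e), Finset.sum_ite_eq' Finset.univ b
    (fun e => ((9:ℂ) • X e : MvPolynomial Idx ℂ))]
  simp only [Finset.mem_univ, if_true]
  rw [smul_eq_C_mul, ← mul_assoc, ← map_mul]
  norm_num

noncomputable def LopA (a as : Idx) : MvPolynomial Idx ℂ →ₐ[ℂ] MvPolynomial Idx ℂ :=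
  aeval fun b : Idx => C (omega ^ (pdot as (b - a)).val) * X (b - a)

lemma Lop_eq_LopA (a as : Idx) : Lop a as = (LopA a as).toLinearMap := rfl

lemma Four_C (r : ℂ) : Four (C r) = C r := by
  rw [Four, aeval_C, algebraMap_eq]

lemma LopA_C (a as : Idx) (r : ℂ) : (LopA a as) (C r) = C r := by
  rw [LopA, aeval_C, algebraMap_eq]

lemma intertwine (as : Idx) : Four.comp (LopA 0 as) = (LopA as 0).comp Four := by
  apply MvPolynomial.algHom_ext
  intro b
  rw [AlgHom.comp_apply, AlgHom.comp_apply]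
  rw [LopA, aeval_X]
  rw [show Four (X b) = ∑ c : Idx, C (omega ^ (pdot b c).val) * X c from by rw [Four, aeval_X]]
  rw [map_mul, Four_C, map_sum]
  have hL : ∀ c : Idx, (LopA as 0) (C (omega ^ (pdot b c).val) * X c)
      = C (omega ^ (pdot b c).val) * X (c - as) := by
    intro c
    rw [map_mul, LopA_C]
    congr 1
    rw [LopA, aeval_X]
    have : pdot 0 (c - as) = 0 := by simp [pdot]
    rw [this]
    simp
  rw [Finset.sum_congr rfl (fun c _ => hL c)]
  rw [show Four (X (b - 0)) = ∑ c : Idx, C (omega ^ (pdot (b - 0) c).val) * X c from by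
    rw [Four, aeval_X]]
  have hre : ∑ c : Idx, C (omega ^ (pdot b c).val) * X ((c - as : Idx))
      = ∑ c : Idx, C (omega ^ (pdot b (c + as)).val) * X c := by
    refine Fintype.sum_equiv (Equiv.subRight as) _ _ fun c => ?_
    simp
  rw [hre, sub_zero, Finset.mul_sum]
  refine Finset.sum_congr rfl fun c _ => ?_
  rw [← mul_assoc, ← map_mul, omega_zpow_add]
  have hex : pdot as b + pdot b c = pdot b (c + as) := by
    simp [pdot]; ring
  rw [hex]

lemma aeval_mem_homog (g : Idx → MvPolynomial Idx ℂ) (hg : ∀ b, (g b).IsHomogeneous 1)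
    (P : MvPolynomial Idx ℂ) (hP : P ∈ homogeneousSubmodule Idx ℂ 6) :
    aeval g P ∈ homogeneousSubmodule Idx ℂ 6 := by
  rw [mem_homogeneousSubmodule] at hP ⊢
  exact (one_mul 6 : (1:ℕ)*6 = 6) ▸ hP.aeval g hg

lemma four_gen_homog (b : Idx) :
    (∑ c : Idx, C (omega ^ (pdot b c).val) * X c : MvPolynomial Idx ℂ).IsHomogeneous 1 := by
  rw [← mem_homogeneousSubmodule]
  refine Submodule.sum_mem _ fun c _ => ?_
  rw [mem_homogeneousSubmodule]
  simpa using (isHomogeneous_C Idx (omega ^ (pdot b c).val)).mul (isHomogeneous_X ℂ c)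

lemma Four_mem (P : MvPolynomial Idx ℂ) (hP : P ∈ homogeneousSubmodule Idx ℂ 6) :
    Four P ∈ homogeneousSubmodule Idx ℂ 6 :=
  aeval_mem_homog _ (fun b => four_gen_homog b) P hP

lemma FourInv_mem (P : MvPolynomial Idx ℂ) (hP : P ∈ homogeneousSubmodule Idx ℂ 6) :
    FourInv P ∈ homogeneousSubmodule Idx ℂ 6 := by
  refine aeval_mem_homog _ (fun b => ?_) P hP
  have h1 : (C ((9:ℂ)⁻¹) * ∑ c : Idx, C (omega ^ (pdot (-b) c).val) * X c :
      MvPolynomial Idx ℂ).IsHomogeneous (0 + 1) :=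
    (isHomogeneous_C Idx ((9:ℂ)⁻¹)).mul (four_gen_homog (-b))
  simpa using h1

noncomputable def e6 : ↥(homogeneousSubmodule Idx ℂ 6) ≃ₗ[ℂ] ↥(homogeneousSubmodule Idx ℂ 6) :=
  LinearEquiv.ofLinear
    (Four.toLinearMap.restrict Four_mem)
    (FourInv.toLinearMap.restrict FourInv_mem)
    (by
      apply LinearMap.ext
      intro x
      apply Subtype.ext
      show Four (FourInv x.val) = x.val
      exact AlgHom.congr_fun Four_comp_FourInv x.val)
    (by
      apply LinearMap.ext
      intro x
      apply Subtype.ext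
      show FourInv (Four x.val) = x.val
      exact AlgHom.congr_fun FourInv_comp_Four x.val)

lemma conj_eq (as : Idx)
    (hmap0 : ∀ P ∈ homogeneousSubmodule Idx ℂ 6, Lop 0 as P ∈ homogeneousSubmodule Idx ℂ 6)
    (hmaps : ∀ P ∈ homogeneousSubmodule Idx ℂ 6, Lop as 0 P ∈ homogeneousSubmodule Idx ℂ 6) :
    (Lop as 0).restrict hmaps = e6.conj ((Lop 0 as).restrict hmap0) := by
  apply LinearMap.ext
  intro x
  apply Subtype.ext
  rw [LinearEquiv.conj_apply]
  show Lop as 0 x.val = Four ((Lop 0 as) ((FourInv (x.val) : MvPolynomial Idx ℂ)))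
  rw [Lop_eq_LopA, Lop_eq_LopA]
  show (LopA as 0) x.val = Four ((LopA 0 as) (FourInv x.val))
  rw [← AlgHom.comp_apply, intertwine as, AlgHom.comp_apply]
  rw [show Four (FourInv x.val) = x.val from AlgHom.congr_fun Four_comp_FourInv x.val]


/-- for nonzero `(a,a*)`, the substitution
`X_b ↦ ω^{a*·(b−a)}·X_{b−a}` maps the space of homogeneous degree-6 polynomials
to itself, and its trace on that space equals 6. -/
theorem stmt_9 (a as : Idx) (h : (a, as) ≠ 0) :
    (∀ P ∈ homogeneousSubmodule Idx ℂ 6, Lop a as P ∈ homogeneousSubmodule Idx ℂ 6) ∧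
    ∀ hmap : ∀ P ∈ homogeneousSubmodule Idx ℂ 6,
        Lop a as P ∈ homogeneousSubmodule Idx ℂ 6,
      LinearMap.trace ℂ ↥(homogeneousSubmodule Idx ℂ 6)
        ((Lop a as).restrict hmap) = 6 := by
  refine ⟨Lop_mem a as, fun hmap => ?_⟩
  rcases eq_or_ne a 0 with rfl | ha
  · have has : as ≠ 0 := by
      intro h0
      exact h (by rw [h0, Prod.mk_eq_zero]; exact ⟨rfl, rfl⟩)
    have hmaps : ∀ P ∈ homogeneousSubmodule Idx ℂ 6,
        Lop as 0 P ∈ homogeneousSubmodule Idx ℂ 6 := Lop_mem as 0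
    have heq : LinearMap.trace ℂ ↥(homogeneousSubmodule Idx ℂ 6) ((Lop 0 as).restrict hmap)
        = LinearMap.trace ℂ ↥(homogeneousSubmodule Idx ℂ 6) ((Lop as 0).restrict hmaps) := by
      rw [conj_eq as hmap hmaps, LinearMap.trace_conj']
    rw [heq, trace_restrict_eq]
    exact trace_sum_ne as 0 has
  · rw [trace_restrict_eq]
    exact trace_sum_ne a as ha
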